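/- For the stepsize sequence α_t = (H+1)/(H+t) with weights α_t^i = α_i ∏_{j=i+1}^t (1-α_j), for every t ≥ 1 it holds that ∑_{i=1}^t (α_t^i)^2 ≤ 2H/t. -/
import Mathlib


open Finset

noncomputable def stepAlpha (H t : ℕ) : ℝ := (H + 1) / (H + t)

noncomputable def stepWeight (H t i : ℕ) : ℝ :=
  stepAlpha H i * ∏ j ∈ Finset.Ioc i t, (1 - stepAlpha H j)

lemma stepAlpha_nonneg (H t : ℕ) : 0 ≤ stepAlpha H t := by
  unfold stepAlpha; positivity

lemma stepAlpha_le_one (H j : ℕ) (hj : 1 ≤ j) : stepAlpha H j ≤ 1 := by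
  unfold stepAlpha
  rw [div_le_one (by positivity)]
  have : (1:ℝ) ≤ j := by exact_mod_cast hj
  linarith

lemma stepProd_nonneg (H t i : ℕ) :
    0 ≤ ∏ j ∈ Finset.Ioc i t, (1 - stepAlpha H j) := by
  apply Finset.prod_nonneg
  intro j hj
  have hj1 : 1 ≤ j := by
    have := (Finset.mem_Ioc.mp hj).1; omega
  linarith [stepAlpha_le_one H j hj1]

lemma stepProd_le (H i : ℕ) (hi : 1 ≤ i) :
    ∀ t, i ≤ t → ∏ j ∈ Finset.Ioc i t, (1 - stepAlpha H j) ≤ (i : ℝ) / t := by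
  intro t ht
  induction t, ht using Nat.le_induction with
  | base =>
    have : (i:ℝ) ≠ 0 := by positivity
    simp [div_self this]
  | succ t ht ih =>
    rw [Finset.prod_Ioc_succ_top ht]
    have htpos : (0:ℝ) < t := by
      have : 1 ≤ t := le_trans hi ht
      exact_mod_cast this
    have hfac : 1 - stepAlpha H (t+1) ≤ (t : ℝ) / (t+1) := by
      unfold stepAlpha
      have h1 : (0:ℝ) < (H:ℝ) + (t+1 : ℕ) := by positivity
      rw [sub_le_iff_le_add]
      rw [div_add_div _ _ (by positivity : ((t:ℝ)+1) ≠ 0) (ne_of_gt h1)]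
      rw [le_div_iff₀ (by positivity)]
      push_cast
      nlinarith
    have hfac_nonneg : 0 ≤ 1 - stepAlpha H (t+1) := by
      linarith [stepAlpha_le_one H (t+1) (by omega)]
    calc (∏ j ∈ Finset.Ioc i t, (1 - stepAlpha H j)) * (1 - stepAlpha H (t+1))
        ≤ ((i:ℝ)/t) * ((t:ℝ)/(t+1)) := by
          apply mul_le_mul ih hfac hfac_nonneg
          positivity
      _ = (i:ℝ) / (t+1 : ℕ) := by
          push_cast
          field_simp

lemma stepWeight_nonneg (H t i : ℕ) : 0 ≤ stepWeight H t i :=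
  mul_nonneg (stepAlpha_nonneg H i) (stepProd_nonneg H t i)

lemma sum_stepWeight (H t : ℕ) (ht : 1 ≤ t) :
    ∑ i ∈ Finset.Icc 1 t, stepWeight H t i = 1 := by
  set g : ℕ → ℝ := fun i => ∏ j ∈ Finset.Ioc i t, (1 - stepAlpha H j) with hg
  have key : ∀ i ∈ Finset.Icc 1 t, stepWeight H t i = g i - g (i - 1) := by
    intro i hi
    obtain ⟨hi1, hit⟩ := Finset.mem_Icc.mp hi
    have hset : Finset.Ioc (i - 1) t = insert i (Finset.Ioc i t) := by
      ext x
      simp only [Finset.mem_Ioc, Finset.mem_insert]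
      omega
    have hnotmem : i ∉ Finset.Ioc i t := by simp
    simp only [hg, stepWeight]
    rw [hset, Finset.prod_insert hnotmem]
    ring
  rw [Finset.sum_congr rfl key]
  rw [show Finset.Icc 1 t = Finset.Ico 1 (t+1) by rw [Finset.Ico_add_one_right_eq_Icc]]
  rw [Finset.sum_Ico_eq_sum_range]
  have hsimp : ∀ k, g (1 + k) - g (1 + k - 1) = g (k + 1) - g k := by
    intro k
    congr 1 <;> congr 1 <;> omega
  simp only [hsimp, Nat.add_sub_cancel]
  rw [Finset.sum_range_sub g]
  have hgt : g t = 1 := by simp [hg]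
  have hg0 : g 0 = 0 := by
    apply Finset.prod_eq_zero (i := 1)
    · simp [Finset.mem_Ioc]; omega
    · unfold stepAlpha
      push_cast
      rw [div_self (by positivity)]
      ring
  simp [hgt, hg0]

lemma stepWeight_le (H t i : ℕ) (hH : 0 < H) (hi1 : 1 ≤ i) (hit : i ≤ t) :
    stepWeight H t i ≤ 2 * H / t := by
  have htpos : (0:ℝ) < t := by
    have : 1 ≤ t := le_trans hi1 hit
    exact_mod_cast this
  have hprod := stepProd_le H i hi1 t hit
  unfold stepWeight
  calc stepAlpha H i * ∏ j ∈ Finset.Ioc i t, (1 - stepAlpha H j)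
      ≤ stepAlpha H i * ((i:ℝ)/t) := by
        exact mul_le_mul_of_nonneg_left hprod (stepAlpha_nonneg H i)
    _ ≤ 2 * H / t := by
        unfold stepAlpha
        rw [div_mul_div_comm, div_le_div_iff₀ (by positivity) htpos]
        have hHr : (1:ℝ) ≤ H := by exact_mod_cast hH
        have hir : (1:ℝ) ≤ i := by exact_mod_cast hi1
        have h1 : (i:ℝ) * t ≤ (H:ℝ) * i * t := by nlinarith [mul_pos (show (0:ℝ) < i by linarith) htpos]
        nlinarith [mul_pos (mul_pos (by positivity : (0:ℝ) < (H:ℝ)) (by positivity : (0:ℝ) < (H:ℝ))) htpos]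

theorem stepWeight_sq_sum_le (H t : ℕ) (hH : 0 < H) (ht : 1 ≤ t) :
    ∑ i ∈ Finset.Icc 1 t, (stepWeight H t i) ^ 2 ≤ 2 * H / t := by
  have hsum := sum_stepWeight H t ht
  calc ∑ i ∈ Finset.Icc 1 t, (stepWeight H t i) ^ 2
      ≤ ∑ i ∈ Finset.Icc 1 t, (2 * H / t) * stepWeight H t i := by
        apply Finset.sum_le_sum
        intro i hi
        obtain ⟨hi1, hit⟩ := Finset.mem_Icc.mp hi
        rw [sq]
        exact mul_le_mul_of_nonneg_right (stepWeight_le H t i hH hi1 hit)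
          (stepWeight_nonneg H t i)
    _ = (2 * H / t) * ∑ i ∈ Finset.Icc 1 t, stepWeight H t i := by
        rw [Finset.mul_sum]
    _ = 2 * H / t := by rw [hsum, mul_one]
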